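/- Commute time formula: for the random walk on a finite connected weighted graph G = (V,E,C) and distinct vertices x, y ∈ V, the expected commute time satisfies E^x(τ_y) + E^y(τ_x) = R_{xy} · ∑_{w ∈ V} μ_w, where R_{xy} = (U_x^{xy} + U_x^{yx})/μ_x is the effective resistance between x and y. -/

import Mathlib

open Finset

variable {V : Type*} [Fintype V] [DecidableEq V]

/-- The weight (generalized degree) of a node: `μ_x = ∑_y c x y`. -/
noncomputable def nodeWeight (c : V → V → ℝ) (x : V) : ℝ := ∑ y, c x y

/-- Transition probabilities of the random walk: `p x y = c x y / μ x`. -/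
noncomputable def transProb (c : V → V → ℝ) (x y : V) : ℝ := c x y / nodeWeight c x

/-- The transition matrix killed at the target node `y` (rows at `y` set to zero), so that
`(killed c y ^ n) x z = P^x(X_0 ≠ y, …, X_{n-1} ≠ y, X_n = z)`. -/
noncomputable def killed (c : V → V → ℝ) (y : V) : Matrix V V ℝ :=
  Matrix.of fun u v => if u = y then 0 else transProb c u v

/-- The survival probability `P^x(τ_y > n)` of the walk started at `x`. -/
noncomputable def survival (c : V → V → ℝ) (x y : V) (n : ℕ) : ℝ :=
  ∑ z ∈ Finset.univ.erase y, (killed c y ^ n) x z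

/-- The expected hitting time `E^x(τ_y) = ∑_{n ≥ 0} P^x(τ_y > n)`. -/
noncomputable def hitExp (c : V → V → ℝ) (x y : V) : ℝ := ∑' n : ℕ, survival c x y n

/-- `U_z^{xy}`: the expected number of times `0 ≤ k < τ_y` with `X_k = z`, for the walk
started at `x`. -/
noncomputable def visitExp (c : V → V → ℝ) (x y z : V) : ℝ :=
  if z = y then 0 else ∑' n : ℕ, (killed c y ^ n) x z

/-- The effective resistance between `x` and `y`: `R_{xy} = (U_x^{xy} + U_x^{yx})/μ_x`. -/
noncomputable def effRes (c : V → V → ℝ) (x y : V) : ℝ :=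
  (visitExp c x y x + visitExp c y x x) / nodeWeight c x

/-!
Write `G_y(u, z)` for the expected number of visits to `z` before `τ_y` from `u`, so that
`E^u(τ_y) = ∑_z G_y(u, z)`. Reversibility of the walk gives `μ_u G_y(u, z) = μ_z G_y(z, u)`, hence
`E^x(τ_y) + E^y(τ_x) = ∑_z μ_z φ(z)` with `φ(z) = G_y(z, x) / μ_x + G_x(z, y) / μ_y`.
The first summand of `φ` is harmonic off `{x, y}`, with defect `-1/μ_x` at `x` and `+1/μ_y` at `y`
(the latter by a last-exit decomposition, as the walk from `x` hits `y` almost surely); the second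
has the opposite defects.
So `φ` is harmonic on the whole connected graph, hence constant, equal to `φ(x) = R_{xy}`.
-/

open Filter Topology

theorem SimpleGraph.Preconnected.mem_of_adj_closed {W : Type*} {G : SimpleGraph W}
    (hG : G.Preconnected) {S : Set W} {a : W} (ha : a ∈ S)
    (hS : ∀ u v, G.Adj u v → u ∈ S → v ∈ S) (v : W) : v ∈ S := by
  obtain ⟨p⟩ := hG a v
  induction p with
  | nil => exact ha
  | cons h _ ih => exact ih (hS _ _ h ha)

section

variable {c : V → V → ℝ} {u v w x y z : V}

omit [Fintype V] [DecidableEq V] in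
theorem pos_of_fromRel_adj (hsym : ∀ u v, c u v = c v u)
    (h : (SimpleGraph.fromRel fun u v : V => 0 < c u v).Adj u v) : 0 < c u v :=
  ((SimpleGraph.fromRel_adj _ u v).mp h).2.elim id fun h' => hsym u v ▸ h'

omit [DecidableEq V] in
theorem nodeWeight_pos [Nontrivial V] (hsym : ∀ u v, c u v = c v u) (hnn : ∀ u v, 0 ≤ c u v)
    (hconn : (SimpleGraph.fromRel fun u v : V => 0 < c u v).Connected) (u : V) :
    0 < nodeWeight c u := by
  obtain ⟨v, hv⟩ := exists_ne u
  obtain ⟨p⟩ := hconn u v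
  cases p with
  | nil => exact absurd rfl hv
  | cons h _ =>
    exact (pos_of_fromRel_adj hsym h).trans_le (single_le_sum (fun w _ => hnn u w) (mem_univ _))

omit [DecidableEq V] in
theorem transProb_nonneg (hnn : ∀ u v, 0 ≤ c u v) : 0 ≤ transProb c u v :=
  div_nonneg (hnn u v) (sum_nonneg fun w _ => hnn u w)

omit [DecidableEq V] in
theorem transProb_pos (hnn : ∀ u v, 0 ≤ c u v) (h : 0 < c u v) : 0 < transProb c u v :=
  div_pos h (h.trans_le (single_le_sum (fun w _ => hnn u w) (mem_univ v)))

omit [DecidableEq V] in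
theorem sum_transProb (hu : nodeWeight c u ≠ 0) : ∑ v, transProb c u v = 1 := by
  unfold transProb
  rw [← sum_div]
  exact div_self hu

theorem killed_apply_of_ne (hu : u ≠ y) : killed c y u v = transProb c u v := by
  simp [killed, hu]

@[simp]
theorem killed_target_apply : killed c y y v = 0 := by
  simp [killed]

@[simp]
theorem killed_pow_succ_target_apply (n : ℕ) : (killed c y ^ (n + 1)) y v = 0 := by
  simp [pow_succ', Matrix.mul_apply]

theorem killed_pow_target_apply_of_ne (n : ℕ) (hv : v ≠ y) : (killed c y ^ n) y v = 0 := by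
  cases n with
  | zero => exact Matrix.one_apply_ne hv.symm
  | succ n => exact killed_pow_succ_target_apply n

theorem killed_nonneg (hnn : ∀ u v, 0 ≤ c u v) : 0 ≤ killed c y u v := by
  by_cases hu : u = y
  · simp [hu]
  · exact killed_apply_of_ne hu ▸ transProb_nonneg hnn

theorem killed_pow_nonneg (hnn : ∀ u v, 0 ≤ c u v) (n : ℕ) (u v : V) :
    0 ≤ (killed c y ^ n) u v := by
  induction n generalizing v with
  | zero => simp only [pow_zero, Matrix.one_apply]; positivity
  | succ n ih =>
    rw [pow_succ, Matrix.mul_apply]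
    exact sum_nonneg fun w _ => mul_nonneg (ih w) (killed_nonneg hnn)

theorem survival_nonneg (hnn : ∀ u v, 0 ≤ c u v) (u : V) (n : ℕ) : 0 ≤ survival c u y n :=
  sum_nonneg fun z _ => killed_pow_nonneg hnn n u z

theorem sum_killed_apply (hu : nodeWeight c u ≠ 0) :
    ∑ v, killed c y u v = if u = y then 0 else 1 := by
  split_ifs with h
  · simp [h]
  · simp_rw [killed_apply_of_ne h, sum_transProb hu]

theorem killed_pow_target_add_survival (u : V) (n : ℕ) :
    (killed c y ^ n) u y + survival c u y n = ∑ z, (killed c y ^ n) u z :=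
  add_sum_erase _ _ (mem_univ y)

theorem sum_killed_pow_succ_apply (hμ : ∀ u, nodeWeight c u ≠ 0) (u : V) (n : ℕ) :
    ∑ z, (killed c y ^ (n + 1)) u z = survival c u y n := by
  simp_rw [pow_succ, Matrix.mul_apply]
  rw [sum_comm]
  simp_rw [← mul_sum, sum_killed_apply (hμ _), mul_ite, mul_zero, mul_one, survival,
    ← filter_ne' univ y, sum_filter, ite_not]

theorem survival_succ_add (hμ : ∀ u, nodeWeight c u ≠ 0) (u : V) (n : ℕ) :
    survival c u y (n + 1) + (killed c y ^ (n + 1)) u y = survival c u y n := by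
  rw [add_comm, killed_pow_target_add_survival, sum_killed_pow_succ_apply hμ]

theorem sum_range_killed_pow_add_survival (hμ : ∀ u, nodeWeight c u ≠ 0) (u : V) (N : ℕ) :
    ∑ n ∈ range (N + 1), (killed c y ^ n) u y + survival c u y N = 1 := by
  induction N with
  | zero =>
    rw [sum_range_one, killed_pow_target_add_survival]
    simp [Matrix.one_apply]
  | succ N ih => rw [sum_range_succ, ← ih, ← survival_succ_add hμ u N]; ring

theorem exists_killed_pow_pos (hsym : ∀ u v, c u v = c v u) (hnn : ∀ u v, 0 ≤ c u v)
    (hconn : (SimpleGraph.fromRel fun u v : V => 0 < c u v).Connected) (y z : V) :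
    ∃ m, 0 < (killed c y ^ m) z y := by
  refine hconn.preconnected.mem_of_adj_closed (S := {z | ∃ m, 0 < (killed c y ^ m) z y})
    (a := y) ⟨0, by simp⟩ ?_ z
  rintro u v huv ⟨m, hm⟩
  by_cases hv : v = y
  · exact ⟨0, by simp [hv]⟩
  refine ⟨m + 1, ?_⟩
  have hvu : 0 < killed c y v u * (killed c y ^ m) u y := by
    rw [killed_apply_of_ne hv]
    exact mul_pos (transProb_pos hnn (pos_of_fromRel_adj hsym huv.symm)) hm
  rw [pow_succ', Matrix.mul_apply]
  exact hvu.trans_le <| single_le_sum (f := fun w => killed c y v w * (killed c y ^ m) w y)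
    (fun w _ => mul_nonneg (killed_nonneg hnn) (killed_pow_nonneg hnn m w y)) (mem_univ u)

theorem summable_killed_pow_apply_target (hnn : ∀ u v, 0 ≤ c u v)
    (hμ : ∀ u, nodeWeight c u ≠ 0) (u : V) : Summable fun n => (killed c y ^ n) u y := by
  refine summable_of_sum_range_le (c := 1) (fun n => killed_pow_nonneg hnn n u y) fun N => ?_
  calc ∑ n ∈ range N, (killed c y ^ n) u y ≤ ∑ n ∈ range (N + 1), (killed c y ^ n) u y :=
        sum_le_sum_of_subset_of_nonneg (range_subset_range.2 N.le_succ)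
          fun n _ _ => killed_pow_nonneg hnn n u y
    _ ≤ 1 := by
      linarith [sum_range_killed_pow_add_survival (y := y) hμ u N, survival_nonneg (y := y) hnn u N]

/-- From every `z` the walk reaches `y` with some probability `δ > 0` in `m` steps, so the expected
number of visits to `z` before `τ_y` is at most `1 / δ`. -/
theorem summable_killed_pow (hsym : ∀ u v, c u v = c v u) (hnn : ∀ u v, 0 ≤ c u v)
    (hμ : ∀ u, nodeWeight c u ≠ 0)
    (hconn : (SimpleGraph.fromRel fun u v : V => 0 < c u v).Connected) (y : V) :
    Summable fun n => killed c y ^ n := by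
  refine Pi.summable.2 fun u => Pi.summable.2 fun z => ?_
  obtain ⟨m, hm⟩ := exists_killed_pow_pos hsym hnn hconn y z
  refine Summable.of_nonneg_of_le (fun n => killed_pow_nonneg hnn n u z) (fun n => ?_)
    (((summable_nat_add_iff m).2 (summable_killed_pow_apply_target (y := y) hnn hμ u)).div_const
      ((killed c y ^ m) z y))
  rw [le_div_iff₀ hm, pow_add, Matrix.mul_apply]
  exact single_le_sum (f := fun w => (killed c y ^ n) u w * (killed c y ^ m) w y)
    (fun w _ => mul_nonneg (killed_pow_nonneg hnn n u w) (killed_pow_nonneg hnn m w y))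
    (mem_univ z)

theorem nodeWeight_mul_killed (hμ : nodeWeight c u ≠ 0) (hu : u ≠ y) :
    nodeWeight c u * killed c y u v = c u v := by
  rw [killed_apply_of_ne hu, transProb, mul_div_cancel₀ _ hμ]

theorem nodeWeight_mul_killed_pow_comm (hsym : ∀ u v, c u v = c v u)
    (hμ : ∀ u, nodeWeight c u ≠ 0) (n : ℕ) (hu : u ≠ y) (hv : v ≠ y) :
    nodeWeight c u * (killed c y ^ n) u v = nodeWeight c v * (killed c y ^ n) v u := by
  induction n generalizing v with
  | zero =>
    rcases eq_or_ne u v with rfl | huv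
    · rfl
    · simp [Matrix.one_apply_ne huv, Matrix.one_apply_ne huv.symm]
  | succ n ih =>
    conv_lhs => rw [pow_succ, Matrix.mul_apply, mul_sum]
    conv_rhs => rw [pow_succ', Matrix.mul_apply, mul_sum]
    refine sum_congr rfl fun w _ => ?_
    rcases eq_or_ne w y with rfl | hw
    · simp [killed_pow_target_apply_of_ne n hu]
    · calc nodeWeight c u * ((killed c y ^ n) u w * killed c y w v)
          = (nodeWeight c w * killed c y w v) * (killed c y ^ n) w u := by
            rw [← mul_assoc, ih hw]
            ring
        _ = nodeWeight c v * (killed c y v w * (killed c y ^ n) w u) := by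
          rw [nodeWeight_mul_killed (hμ w) hw, hsym, ← nodeWeight_mul_killed (hμ v) hv, mul_assoc]

@[simp]
theorem visitExp_target : visitExp c u y y = 0 :=
  if_pos rfl

end

/-- Unlike `visitExp`, the column `z = y` is not zeroed: it holds the probability of hitting `y`,
which is `1`. -/
noncomputable def green (c : V → V → ℝ) (y : V) : Matrix V V ℝ := ∑' n, killed c y ^ n

section

variable {c : V → V → ℝ} {u v w x y z : V} (hK : Summable fun n => killed c y ^ n)
include hK

theorem green_apply (u z : V) : green c y u z = ∑' n, (killed c y ^ n) u z := by
  exact ((Pi.hasSum.1 (Pi.hasSum.1 hK.hasSum u) z).tsum_eq).symm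

theorem green_eq_one_add_killed_mul : green c y = 1 + killed c y * green c y := by
  rw [green, ← hK.tsum_mul_left, hK.tsum_eq_zero_add, pow_zero]
  simp_rw [pow_succ']

theorem green_mul_killed : green c y * killed c y = green c y - 1 := by
  rw [eq_sub_iff_add_eq, green, ← hK.tsum_mul_right, hK.tsum_eq_zero_add, pow_zero, add_comm]
  simp_rw [pow_succ]

theorem green_target_apply (hv : v ≠ y) : green c y y v = 0 := by
  rw [green_eq_one_add_killed_mul hK]
  simp [Matrix.mul_apply, Matrix.one_apply_ne hv.symm]

theorem tendsto_survival (u : V) : Tendsto (survival c u y) atTop (𝓝 0) := by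
  have h := tendsto_finsetSum (univ.erase y) fun z _ =>
    (Pi.summable.1 (Pi.summable.1 hK u) z).tendsto_atTop_zero
  rwa [sum_const_zero] at h

theorem green_apply_target (hμ : ∀ u, nodeWeight c u ≠ 0) (u : V) : green c y u y = 1 := by
  have hsum := (Pi.summable.1 (Pi.summable.1 hK u) y).hasSum.tendsto_sum_nat
  rw [green_apply hK]
  refine tendsto_nhds_unique (hsum.comp (tendsto_add_atTop_nat 1)) ?_
  simp_rw [Function.comp_def, eq_sub_of_add_eq (sum_range_killed_pow_add_survival hμ u _)]
  simpa using (tendsto_survival hK u).const_sub 1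

theorem nodeWeight_mul_green_comm (hsym : ∀ u v, c u v = c v u)
    (hμ : ∀ u, nodeWeight c u ≠ 0) (hu : u ≠ y) (hv : v ≠ y) :
    nodeWeight c u * green c y u v = nodeWeight c v * green c y v u := by
  rw [green_apply hK, green_apply hK, ← tsum_mul_left, ← tsum_mul_left]
  exact tsum_congr fun n => nodeWeight_mul_killed_pow_comm hsym hμ n hu hv

theorem visitExp_of_ne (hz : z ≠ y) : visitExp c u y z = green c y u z := by
  rw [visitExp, if_neg hz, green_apply hK]

theorem visitExp_target_start : visitExp c y y z = 0 := by
  rcases eq_or_ne z y with rfl | hz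
  · simp [visitExp]
  · rw [visitExp_of_ne hK hz, green_target_apply hK hz]

theorem nodeWeight_mul_visitExp_comm (hsym : ∀ u v, c u v = c v u)
    (hμ : ∀ u, nodeWeight c u ≠ 0) (u v : V) :
    nodeWeight c u * visitExp c u y v = nodeWeight c v * visitExp c v y u := by
  rcases eq_or_ne u y with rfl | hu
  · simp [visitExp_target_start hK]
  rcases eq_or_ne v y with rfl | hv
  · simp [visitExp_target_start hK]
  rw [visitExp_of_ne hK hv, visitExp_of_ne hK hu, nodeWeight_mul_green_comm hK hsym hμ hu hv]

theorem hitExp_eq_sum_visitExp (u : V) : hitExp c u y = ∑ z, visitExp c u y z := by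
  simp_rw [hitExp, survival]
  rw [Summable.tsum_finsetSum fun z _ => Pi.summable.1 (Pi.summable.1 hK u) z,
    ← sum_erase univ (f := fun z => visitExp c u y z) visitExp_target]
  exact sum_congr rfl fun z hz => by rw [visitExp_of_ne hK (ne_of_mem_erase hz), green_apply hK]

theorem visitExp_eq_add_sum_transProb_mul (hx : x ≠ y) (hw : w ≠ y) :
    visitExp c w y x = (if w = x then 1 else 0) + ∑ v, transProb c w v * visitExp c v y x := by
  simp_rw [visitExp_of_ne hK hx, ← killed_apply_of_ne hw]
  conv_lhs => rw [green_eq_one_add_killed_mul hK]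
  rw [Matrix.add_apply, Matrix.one_apply, Matrix.mul_apply]

theorem sum_transProb_target_mul_visitExp (hsym : ∀ u v, c u v = c v u)
    (hμ : ∀ u, nodeWeight c u ≠ 0) (hx : x ≠ y) :
    ∑ v, transProb c y v * visitExp c v y x = nodeWeight c x / nodeWeight c y := by
  have hterm : ∀ v, transProb c y v * visitExp c v y x
      = nodeWeight c x / nodeWeight c y * (green c y x v * killed c y v y) := by
    intro v
    rcases eq_or_ne v y with rfl | hv
    · simp [visitExp_target_start hK]
    have hrev := nodeWeight_mul_visitExp_comm hK hsym hμ x v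
    rw [visitExp_of_ne hK hv] at hrev
    rw [killed_apply_of_ne hv, transProb, transProb, hsym y v]
    field_simp [hμ y, hμ v]
    linear_combination (-c v y) * hrev
  rw [sum_congr rfl fun v _ => hterm v, ← mul_sum, ← Matrix.mul_apply, green_mul_killed hK,
    Matrix.sub_apply, green_apply_target hK hμ, Matrix.one_apply_ne hx, sub_zero, mul_one]

end

noncomputable def commutePotential (c : V → V → ℝ) (x y w : V) : ℝ :=
  visitExp c w y x / nodeWeight c x + visitExp c w x y / nodeWeight c y

section

variable {c : V → V → ℝ} {x y : V}

theorem sum_transProb_mul_visitExp_add_ite (hK : Summable fun n => killed c y ^ n)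
    (hsym : ∀ u v, c u v = c v u) (hμ : ∀ u, nodeWeight c u ≠ 0) (hx : x ≠ y) (w : V) :
    ∑ v, transProb c w v * visitExp c v y x + (if w = x then 1 else 0)
      = visitExp c w y x + (if w = y then nodeWeight c x / nodeWeight c y else 0) := by
  rcases eq_or_ne w y with rfl | hw
  · rw [sum_transProb_target_mul_visitExp hK hsym hμ hx, if_neg hx.symm,
      visitExp_target_start hK, if_pos rfl]
    ring
  · rw [visitExp_eq_add_sum_transProb_mul hK hx hw, if_neg hw]
    ring

theorem sum_transProb_mul_commutePotential (hKx : Summable fun n => killed c x ^ n)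
    (hKy : Summable fun n => killed c y ^ n) (hsym : ∀ u v, c u v = c v u)
    (hμ : ∀ u, nodeWeight c u ≠ 0) (hxy : x ≠ y) (w : V) :
    ∑ v, transProb c w v * commutePotential c x y v = commutePotential c x y w := by
  have hA := sum_transProb_mul_visitExp_add_ite hKy hsym hμ hxy w
  have hB := sum_transProb_mul_visitExp_add_ite hKx hsym hμ hxy.symm w
  simp_rw [commutePotential, mul_add, sum_add_distrib, mul_div_assoc', ← sum_div]
  rw [eq_sub_of_add_eq hA, eq_sub_of_add_eq hB]
  have := hμ x
  have := hμ y
  split_ifs <;> field_simp <;> ring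

theorem commutePotential_self (hKx : Summable fun n => killed c x ^ n) :
    commutePotential c x y x = effRes c x y := by
  simp [commutePotential, effRes, visitExp_target_start hKx]

theorem visitExp_add_visitExp_eq_nodeWeight_mul_commutePotential
    (hKx : Summable fun n => killed c x ^ n) (hKy : Summable fun n => killed c y ^ n)
    (hsym : ∀ u v, c u v = c v u) (hμ : ∀ u, nodeWeight c u ≠ 0) (z : V) :
    visitExp c x y z + visitExp c y x z = nodeWeight c z * commutePotential c x y z := by
  rw [commutePotential, mul_add, mul_div_assoc', mul_div_assoc',
    ← nodeWeight_mul_visitExp_comm hKy hsym hμ x z, ← nodeWeight_mul_visitExp_comm hKx hsym hμ y z,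
    mul_div_cancel_left₀ _ (hμ x), mul_div_cancel_left₀ _ (hμ y)]

omit [DecidableEq V] in
/-- Maximum principle: the set where `s` attains its maximum is closed under adjacency. -/
theorem eq_of_sum_transProb_mul_eq (hsym : ∀ u v, c u v = c v u) (hnn : ∀ u v, 0 ≤ c u v)
    (hμ : ∀ u, nodeWeight c u ≠ 0)
    (hconn : (SimpleGraph.fromRel fun u v : V => 0 < c u v).Connected) {s : V → ℝ}
    (hs : ∀ w, ∑ v, transProb c w v * s v = s w) (u v : V) : s u = s v := by
  obtain ⟨w₀, -, hmax⟩ := exists_max_image univ s ⟨u, mem_univ u⟩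
  suffices h : ∀ u, s u = s w₀ by rw [h u, h v]
  refine hconn.preconnected.mem_of_adj_closed (S := {u | s u = s w₀}) rfl ?_
  intro a b hab (ha : s a = s w₀)
  have hzero : ∑ v, transProb c a v * (s w₀ - s v) = 0 := by
    simp_rw [mul_sub, sum_sub_distrib, ← sum_mul, sum_transProb (hμ a), hs, ha]
    ring
  have hb := (sum_eq_zero_iff_of_nonneg fun v _ => mul_nonneg (transProb_nonneg hnn)
    (sub_nonneg.2 (hmax v (mem_univ v)))).1 hzero b (mem_univ b)
  have hpos := transProb_pos hnn (pos_of_fromRel_adj hsym hab)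
  exact (sub_eq_zero.1 ((mul_eq_zero.1 hb).resolve_left hpos.ne')).symm

end

/-- **Commute time formula.** For the random walk on a finite connected
weighted graph and distinct vertices `x ≠ y`, the expected commute time satisfies
`E^x(τ_y) + E^y(τ_x) = R_{xy} · ∑_{w ∈ V} μ_w`, where `R_{xy} = (U_x^{xy} + U_x^{yx})/μ_x`
is the effective resistance between `x` and `y`. -/
theorem commute_time_formula
    (c : V → V → ℝ) (hsym : ∀ u v, c u v = c v u) (hnn : ∀ u v, 0 ≤ c u v)
    (hconn : (SimpleGraph.fromRel fun u v : V => 0 < c u v).Connected)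
    (x y : V) (hxy : x ≠ y) :
    hitExp c x y + hitExp c y x = effRes c x y * ∑ w, nodeWeight c w := by
  have : Nontrivial V := ⟨⟨x, y, hxy⟩⟩
  have hμ : ∀ u, nodeWeight c u ≠ 0 := fun u => (nodeWeight_pos hsym hnn hconn u).ne'
  have hK := summable_killed_pow hsym hnn hμ hconn
  have hconst := eq_of_sum_transProb_mul_eq hsym hnn hμ hconn
    (sum_transProb_mul_commutePotential (hK x) (hK y) hsym hμ hxy)
  calc hitExp c x y + hitExp c y x = ∑ z, nodeWeight c z * commutePotential c x y z := by
        simp_rw [hitExp_eq_sum_visitExp (hK _), ← sum_add_distrib,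
          visitExp_add_visitExp_eq_nodeWeight_mul_commutePotential (hK x) (hK y) hsym hμ]
    _ = ∑ z, nodeWeight c z * commutePotential c x y x := by simp_rw [hconst _ x]
    _ = effRes c x y * ∑ w, nodeWeight c w := by
        rw [commutePotential_self (hK x), ← sum_mul, mul_comm]
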